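/- arXiv:2202.13784 — 3 statements merged into one kernel-verified Lean document; each statement's English description precedes it below -/
import Mathlib

section
/- Let R = K[x_1,...,x_n] be a polynomial ring over a field K, let J ⊆ R be an ideal and let f ∈ R. Then the radical of J + ⟨f⟩ equals the radical of ((J : f^∞) + ⟨f⟩) ∩ (J : (J : f^∞)), where J : f^∞ denotes the saturation of J by f and J : (J : f^∞) denotes the ideal quotient of J by the saturation. -/
/-- The saturation `I : J^∞` of an ideal `I` by an ideal `J`: the union (supremum) of the
increasing chain of ideal quotients `I : J^k` for `k → ∞`. -/
noncomputable def Ideal.sat {R : Type*} [CommRing R] (I J : Ideal R) : Ideal R :=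
  ⨆ k : ℕ, Submodule.colon I ((J ^ k : Ideal R) : Set R)

/-!
In a Noetherian ring the chain `I : J^k` stabilises, so `S = I : J^∞` equals `I : J^N` and
`J^N S ⊆ I`; hence `J ⊆ √(I : S)`, and `I + J` lies in both `√(S + J)` and `√(I : S)`.
Conversely, every `g ∈ (S + J) ∩ (I : S)` satisfies `g² ∈ g S + J ⊆ I + J`.
-/

namespace Ideal

variable {R : Type*} [CommRing R]

theorem le_sat (I J : Ideal R) : I ≤ I.sat J :=
  le_iSup_of_le 0 le_colon

theorem mul_colon_le (I A : Ideal R) : A * I.colon A ≤ I :=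
  mul_le.mpr fun a ha r hr => mul_comm r a ▸ Submodule.mem_colon.mp hr a ha

theorem radical_sup_inf_colon_le (I A B : Ideal R) :
    ((A ⊔ B) ⊓ I.colon A).radical ≤ (I ⊔ B).radical := by
  set X := (A ⊔ B) ⊓ I.colon A
  have hsq : X * X ≤ I ⊔ B :=
    calc X * X ≤ (A ⊔ B) * I.colon A := mul_mono inf_le_left inf_le_right
      _ = A * I.colon A ⊔ B * I.colon A := sup_mul _ _ _
      _ ≤ I ⊔ B := sup_le_sup (mul_colon_le I A) mul_le_left
  calc X.radical = (X * X).radical := by rw [radical_mul, inf_idem]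
    _ ≤ (I ⊔ B).radical := radical_mono hsq

variable [IsNoetherianRing R]

theorem exists_sat_eq_colon_pow (I J : Ideal R) :
    ∃ N, I.sat J = I.colon ((J ^ N : Ideal R) : Set R) :=
  ⟨_, WellFoundedGT.iSup_eq_monotonicSequenceLimit
    ⟨fun k => I.colon ((J ^ k : Ideal R) : Set R),
      fun _ _ h => Submodule.colon_mono le_rfl (pow_le_pow_right h)⟩⟩

theorem exists_pow_le_colon_sat (I J : Ideal R) : ∃ N, J ^ N ≤ I.colon (I.sat J) := by
  obtain ⟨N, hN⟩ := exists_sat_eq_colon_pow I J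
  refine ⟨N, fun x hx => Submodule.mem_colon.mpr fun s hs => ?_⟩
  rw [SetLike.mem_coe, hN, Submodule.mem_colon] at hs
  simpa only [smul_eq_mul, mul_comm] using hs x hx

theorem le_radical_colon_sat (I J : Ideal R) : J ≤ (I.colon (I.sat J)).radical := by
  obtain ⟨N, hN⟩ := exists_pow_le_colon_sat I J
  exact fun x hx => ⟨N, hN (pow_mem_pow hx N)⟩

theorem radical_sup_eq_radical_sup_sat_inf_colon_sat (I J : Ideal R) :
    (I ⊔ J).radical = ((I.sat J ⊔ J) ⊓ I.colon (I.sat J)).radical := by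
  refine le_antisymm ?_ (radical_sup_inf_colon_le I (I.sat J) J)
  rw [radical_le_radical_iff, radical_inf]
  exact le_inf ((sup_le_sup_right (le_sat I J) J).trans le_radical)
    (sup_le (le_colon.trans le_radical) (le_radical_colon_sat I J))

end Ideal

/-- Let `R = K[x_1,...,x_n]`, `J ⊆ R` an ideal, `f ∈ R`.  Then
`√(J + ⟨f⟩) = √(((J : f^∞) + ⟨f⟩) ∩ (J : (J : f^∞)))`. -/
theorem radical_add_eq_radical_inf_sat {K : Type*} [Field K] {n : ℕ}
    (J : Ideal (MvPolynomial (Fin n) K)) (f : MvPolynomial (Fin n) K) :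
    (J ⊔ Ideal.span {f}).radical =
      ((Ideal.sat J (Ideal.span {f}) ⊔ Ideal.span {f}) ⊓
        Submodule.colon J (Ideal.sat J (Ideal.span {f}))).radical :=
  Ideal.radical_sup_eq_radical_sup_sat_inf_colon_sat J (Ideal.span {f})
end

section
/- Let R = K[x_1,...,x_n] be a polynomial ring over a field K and let J ⊆ R be an ideal and f ∈ R. Then the radical of the double quotient J : (J : f^∞) equals the intersection over all g ∈ J : f^∞ of the radicals of the ideal quotients J : g. In particular, f lies in the radical of J : (J : f^∞). -/
namespace Ideal

variable {R : Type*} [CommRing R]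

theorem mem_sat_iff {I J : Ideal R} {g : R} :
    g ∈ I.sat J ↔ ∃ k : ℕ, g ∈ I.colon ((J ^ k : Ideal R) : Set R) := by
  refine Submodule.mem_iSup_of_directed _ (Monotone.directed_le fun k l hkl => ?_)
  exact Submodule.colon_mono le_rfl (pow_le_pow_right hkl)

theorem exists_pow_mul_mem_of_mem_sat_span_singleton {J : Ideal R} {f g : R}
    (hg : g ∈ J.sat (span {f})) : ∃ k : ℕ, f ^ k * g ∈ J := by
  obtain ⟨k, hk⟩ := mem_sat_iff.1 hg
  refine ⟨k, mul_comm g (f ^ k) ▸ Submodule.mem_colon.1 hk (f ^ k) ?_⟩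
  exact pow_mem_pow (mem_span_singleton_self f) k

theorem colon_span_finset (J : Ideal R) (T : Finset R) :
    J.colon (span (T : Set R)) = T.inf fun g => J.colon (span {g}) := by
  ext r
  simp only [colon_span, Submodule.mem_colon, Submodule.mem_finsetInf, Finset.mem_coe,
    smul_eq_mul, Set.mem_singleton_iff, forall_eq]

theorem radical_colon_eq_iInf_of_fg (J : Ideal R) {S : Ideal R} (hS : S.FG) :
    (J.colon (S : Set R)).radical = ⨅ g ∈ S, (J.colon (span {g})).radical := by
  refine le_antisymm (le_iInf₂ fun g hg => radical_mono ?_) ?_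
  · exact Submodule.colon_mono le_rfl (span_le.2 (Set.singleton_subset_iff.2 hg))
  · obtain ⟨T, rfl⟩ := hS
    rw [colon_span_finset, ← radicalInfTopHom_apply, map_finset_inf, Finset.inf_eq_iInf]
    exact iInf₂_mono' fun g hg => ⟨g, subset_span hg, le_rfl⟩

end Ideal

/-- Let `R = K[x_1,...,x_n]`, `J ⊆ R` an ideal and `f ∈ R`.  Then
`√(J : (J : f^∞)) = ⋂_{g ∈ J : f^∞} √(J : g)`; in particular
`f ∈ √(J : (J : f^∞))`. -/
theorem radical_colon_sat {K : Type*} [Field K] {n : ℕ}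
    (J : Ideal (MvPolynomial (Fin n) K)) (f : MvPolynomial (Fin n) K) :
    (Submodule.colon J (Ideal.sat J (Ideal.span {f}))).radical =
      (⨅ g ∈ Ideal.sat J (Ideal.span {f}),
        (Submodule.colon J (Ideal.span {g})).radical) ∧
    f ∈ (Submodule.colon J (Ideal.sat J (Ideal.span {f}))).radical := by
  have h := Ideal.radical_colon_eq_iInf_of_fg J (IsNoetherian.noetherian (J.sat (Ideal.span {f})))
  refine ⟨h, h ▸ Ideal.mem_iInf.2 fun g => Ideal.mem_iInf.2 fun hg => ?_⟩
  obtain ⟨k, hk⟩ := Ideal.exists_pow_mul_mem_of_mem_sat_span_singleton hg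
  exact ⟨k, Ideal.mem_colon_span_singleton.2 hk⟩
end

section
/- Let R = K[x_1,...,x_n] be a polynomial ring over a field K, let I ⊆ R be an ideal and let J = ⟨g_1,...,g_t⟩ ⊆ R. Then the radical of I : J equals the radical of (I : g_1) ∩ ((I + ⟨g_1⟩) : g_2) ∩ ... ∩ ((I + ⟨g_1,...,g_{t-1}⟩) : g_t). -/
/-!
The inclusion `√(I : J) ⊆ √(⋂ ...)` is immediate, since `I ⊆ I + ⟨g_1,...,g_{i-1}⟩`
and `g_i ∈ J`. Conversely, if `p g_i ∈ I + ⟨g_1,...,g_{i-1}⟩` for every `i`, then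
induction on `i` gives `p ^ i g_i ∈ I`: write `p g_i = a + b` with `a ∈ I` and `b` a
combination of earlier generators, each of which is killed into `I` by `p ^ (i - 1)`.
Hence `p ^ t ∈ I : J`.
-/

namespace Ideal

variable {R : Type*} [CommSemiring R]

theorem colon_span_range_le_iInf_colon_sup_span_lt {ι : Type*} [LT ι] (I : Ideal R)
    (g : ι → R) :
    I.colon (span (Set.range g) : Set R) ≤
      ⨅ i, (I ⊔ span (g '' {j | j < i})).colon (span {g i} : Set R) :=
  le_iInf fun i => Submodule.colon_mono le_sup_left
    (SetLike.coe_subset_coe.mpr (span_mono (Set.singleton_subset_iff.mpr ⟨i, rfl⟩)))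

theorem pow_succ_mul_mem_of_mul_mem_sup_span_lt {t : ℕ} {I : Ideal R} {g : Fin t → R} {p : R}
    (hp : ∀ i, p * g i ∈ I ⊔ span (g '' {j | j < i})) (i : Fin t) :
    p ^ ((i : ℕ) + 1) * g i ∈ I := by
  induction i using WellFoundedLT.induction with
  | _ i ih =>
    obtain ⟨a, ha, b, hb, hab⟩ := Submodule.mem_sup.mp (hp i)
    have earlier_le : span (g '' {j | j < i}) ≤ I.colon (span {p ^ (i : ℕ)} : Set R) := by
      rw [span_le]
      rintro _ ⟨j, hj, rfl⟩
      have hji : (j : ℕ) + 1 ≤ i := hj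
      rw [SetLike.mem_coe, mem_colon_span_singleton, mul_comm,
        ← Nat.sub_add_cancel hji, pow_add, mul_assoc]
      exact I.mul_mem_left _ (ih j hj)
    have hpb : p ^ (i : ℕ) * b ∈ I :=
      mul_comm b _ ▸ mem_colon_span_singleton.mp (earlier_le hb)
    rw [pow_succ, mul_assoc, ← hab, mul_add]
    exact I.add_mem (I.mul_mem_left _ ha) hpb

theorem iInf_colon_sup_span_lt_le_radical_colon_span_range {t : ℕ} (I : Ideal R)
    (g : Fin t → R) :
    ⨅ i, (I ⊔ span (g '' {j | j < i})).colon (span {g i} : Set R) ≤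
      (I.colon (span (Set.range g) : Set R)).radical := by
  intro p hp
  have hp' : ∀ i, p * g i ∈ I ⊔ span (g '' {j | j < i}) := fun i =>
    mem_colon_span_singleton.mp (Submodule.mem_iInf _ |>.mp hp i)
  refine ⟨t, ?_⟩
  rw [colon_span, Submodule.mem_colon]
  rintro _ ⟨i, rfl⟩
  rw [smul_eq_mul, ← Nat.sub_add_cancel (i.isLt : (i : ℕ) + 1 ≤ t), pow_add, mul_assoc]
  exact I.mul_mem_left _ (pow_succ_mul_mem_of_mul_mem_sup_span_lt hp' i)

end Ideal

/-- Let `R = K[x_1,...,x_n]`, `I ⊆ R` an ideal and `J = ⟨g_1,...,g_t⟩`.  Then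
`√(I : J) = √((I : g_1) ∩ ((I + ⟨g_1⟩) : g_2) ∩ ⋯ ∩ ((I + ⟨g_1,...,g_{t-1}⟩) : g_t))`. -/
theorem radical_colon_eq_radical_iInf {K : Type*} [Field K] {n t : ℕ}
    (I : Ideal (MvPolynomial (Fin n) K)) (g : Fin t → MvPolynomial (Fin n) K)
    (J : Ideal (MvPolynomial (Fin n) K)) (hJ : J = Ideal.span (Set.range g)) :
    (Submodule.colon I J).radical =
      (⨅ i : Fin t,
        Submodule.colon (I ⊔ Ideal.span (g '' {j | j < i})) (Ideal.span {g i})).radical := by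
  subst hJ
  exact le_antisymm
    (Ideal.radical_mono (Ideal.colon_span_range_le_iInf_colon_sup_span_lt I g))
    (Ideal.radical_le_radical_iff.mpr
      (Ideal.iInf_colon_sup_span_lt_le_radical_colon_span_range I g))
end
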